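/- Ackermann membership interprets hereditarily finite set theory in the natural numbers: defining a ∈_Ack b to hold iff the a-th bit of the binary expansion of b equals 1, the structure (ℕ, ∈_Ack) is isomorphic to the structure of hereditarily finite sets with true membership. -/

import Mathlib

/-- `a ∈_Ack b`: the `a`-th binary digit of `b` is `1`. -/
def AckMem (a b : ℕ) : Prop := Nat.testBit b a = true

/-- The finite levels `V_n` of the cumulative hierarchy, as `ZFSet`s. -/
def Vfin : ℕ → ZFSet := fun n => n.rec ∅ fun _ ih => ZFSet.powerset ih

/-- A `ZFSet` is hereditarily finite iff it lies in some finite level `V_n`,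
i.e. iff it is an element of `V_ω`. -/
def IsHF (x : ZFSet) : Prop := ∃ n : ℕ, x ∈ Vfin n

/-- The Ackermann encoding: `ackEnc n` is the set of `ackEnc a` for the bits `a` of `n`. -/
noncomputable def ackEnc (n : ℕ) : ZFSet :=
  (((Finset.range n).filter fun a => n.testBit a).attach).toList.foldr
    (fun a s => insert (ackEnc a.1) s) ∅
decreasing_by
  have h := a.2
  simp only [Finset.mem_filter, Finset.mem_range] at h
  exact h.1

lemma mem_foldr {α : Type*} (g : α → ZFSet) (x : ZFSet) :
    ∀ l : List α, (x ∈ l.foldr (fun a s => insert (g a) s) (∅ : ZFSet) ↔ ∃ a ∈ l, x = g a)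
  | [] => by simp [ZFSet.notMem_empty]
  | a :: l => by
    simp [ZFSet.mem_insert_iff, mem_foldr g x l]

lemma mem_ackEnc {x : ZFSet} {n : ℕ} : x ∈ ackEnc n ↔ ∃ a, n.testBit a ∧ x = ackEnc a := by
  rw [ackEnc, mem_foldr]
  constructor
  · rintro ⟨a, -, rfl⟩
    have h := a.2
    simp only [Finset.mem_filter, Finset.mem_range] at h
    exact ⟨a.1, h.2, rfl⟩
  · rintro ⟨a, h, rfl⟩
    have ha : a < n := lt_of_lt_of_le ((Nat.lt_two_pow_self (n := a))) (Nat.ge_two_pow_of_testBit h)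
    refine ⟨⟨a, ?_⟩, by simp, rfl⟩
    simp [Finset.mem_filter, Finset.mem_range, ha, h]

lemma Vfin_succ (n : ℕ) : Vfin (n + 1) = ZFSet.powerset (Vfin n) := rfl

lemma Vfin_mono : ∀ {m n : ℕ}, m ≤ n → Vfin m ⊆ Vfin n := by
  have step : ∀ k, Vfin k ⊆ Vfin (k + 1) := by
    intro k
    induction k with
    | zero => intro x hx; exact absurd hx (ZFSet.notMem_empty x)
    | succ k ih =>
      intro x hx
      rw [Vfin_succ, ZFSet.mem_powerset] at hx ⊢
      exact fun z hz => ih (hx hz)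
  intro m n h
  induction h with
  | refl => exact fun _ h => h
  | step h ih => exact fun x hx => step _ (ih hx)

lemma ackEnc_mem_Vfin (n : ℕ) : ackEnc n ∈ Vfin (n + 1) := by
  induction n using Nat.strong_induction_on with
  | _ n ih =>
    rw [Vfin_succ, ZFSet.mem_powerset]
    intro x hx
    rw [mem_ackEnc] at hx
    obtain ⟨a, ha, rfl⟩ := hx
    have ha' : a < n := lt_of_lt_of_le ((Nat.lt_two_pow_self (n := a))) (Nat.ge_two_pow_of_testBit ha)
    exact Vfin_mono ha' (ih a ha')

lemma ackEnc_injective : Function.Injective ackEnc := by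
  intro m n
  induction n using Nat.strong_induction_on generalizing m with
  | _ n ih =>
    intro h
    apply Nat.eq_of_testBit_eq
    intro a
    by_cases hm : m.testBit a
    · have : ackEnc a ∈ ackEnc n := by rw [← h]; exact mem_ackEnc.2 ⟨a, hm, rfl⟩
      obtain ⟨c, hc, hac⟩ := mem_ackEnc.1 this
      have hcn : c < n := lt_of_lt_of_le ((Nat.lt_two_pow_self (n := c))) (Nat.ge_two_pow_of_testBit hc)
      have hac' : a = c := ih c hcn hac
      rw [hm, hac', hc]
    · by_cases hn : n.testBit a
      · have ha : a < n := lt_of_lt_of_le ((Nat.lt_two_pow_self (n := a))) (Nat.ge_two_pow_of_testBit hn)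
        have : ackEnc a ∈ ackEnc m := by rw [h]; exact mem_ackEnc.2 ⟨a, hn, rfl⟩
        obtain ⟨b, hb, hab⟩ := mem_ackEnc.1 this
        have := ih a ha hab.symm
        exact absurd (this ▸ hb) hm
      · simp [hm, hn]

lemma geo_lt : ∀ b : ℕ, ∑ i ∈ Finset.range b, 2 ^ i < 2 ^ b
  | 0 => by simp
  | b + 1 => by
    rw [Finset.sum_range_succ, pow_succ]
    have := geo_lt b
    omega

lemma sum_two_pow_lt {S : Finset ℕ} {b : ℕ} (h : ∀ i ∈ S, i < b) :
    ∑ i ∈ S, 2 ^ i < 2 ^ b :=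
  lt_of_le_of_lt
    (Finset.sum_le_sum_of_subset fun i hi => Finset.mem_range.2 (h i hi)) (geo_lt b)

lemma testBit_sum (S : Finset ℕ) (a : ℕ) :
    Nat.testBit (∑ i ∈ S, 2 ^ i) a = true ↔ a ∈ S := by
  induction S using Finset.induction_on_max generalizing a with
  | empty => simp
  | insert b S hb ih =>
    rw [Finset.sum_insert (fun h => lt_irrefl b (hb b h))]
    have hlt : ∑ i ∈ S, 2 ^ i < 2 ^ b := sum_two_pow_lt hb
    rcases lt_trichotomy a b with h | rfl | h
    · rw [Nat.testBit_two_pow_add_gt h, ih]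
      simp only [Finset.mem_insert]
      constructor
      · exact Or.inr
      · rintro (rfl | hs); exact absurd h (lt_irrefl a); exact hs
    · rw [Nat.testBit_two_pow_add_eq, Nat.testBit_lt_two_pow hlt]
      simp
    · have : 2 ^ b + ∑ i ∈ S, 2 ^ i < 2 ^ a := by
        calc 2 ^ b + ∑ i ∈ S, 2 ^ i < 2 ^ b + 2 ^ b := by omega
          _ = 2 ^ (b + 1) := by ring
          _ ≤ 2 ^ a := Nat.pow_le_pow_right (by norm_num) h
      rw [Nat.testBit_lt_two_pow this]
      simp only [Bool.false_eq_true, Finset.mem_insert, false_iff]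
      rintro (rfl | hs)
      · exact absurd h (lt_irrefl a)
      · exact absurd (hb a hs) (by omega)

lemma ackEnc_surj : ∀ n, ∃ N, ∀ y ∈ Vfin n, ∃ m < N, ackEnc m = y := by
  intro n
  induction n with
  | zero => exact ⟨0, fun y hy => absurd hy (ZFSet.notMem_empty y)⟩
  | succ n ih =>
    classical
    obtain ⟨N, hN⟩ := ih
    refine ⟨2 ^ N, fun y hy => ?_⟩
    rw [Vfin_succ, ZFSet.mem_powerset] at hy
    refine ⟨∑ i ∈ (Finset.range N).filter fun m => ackEnc m ∈ y, 2 ^ i, ?_, ?_⟩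
    · exact sum_two_pow_lt fun i hi => Finset.mem_range.1 (Finset.mem_of_mem_filter i hi)
    · apply ZFSet.ext
      intro x
      rw [mem_ackEnc]
      constructor
      · rintro ⟨a, ha, rfl⟩
        rw [testBit_sum, Finset.mem_filter] at ha
        exact ha.2
      · intro hx
        obtain ⟨m, hm, rfl⟩ := hN x (hy hx)
        refine ⟨m, ?_, rfl⟩
        rw [testBit_sum, Finset.mem_filter, Finset.mem_range]
        exact ⟨hm, hx⟩

/-- Ackermann membership interprets hereditarily finite set theory in ℕ:
`(ℕ, ∈_Ack)` is isomorphic to the hereditarily finite sets with true membership. -/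
theorem ackermann_iso_hereditarily_finite :
    ∃ f : ℕ → ZFSet,
      (∀ n : ℕ, IsHF (f n)) ∧
      Function.Injective f ∧
      (∀ y : ZFSet, IsHF y → ∃ n : ℕ, f n = y) ∧
      (∀ a b : ℕ, AckMem a b ↔ f a ∈ f b) := by
  refine ⟨ackEnc, fun n => ⟨n + 1, ackEnc_mem_Vfin n⟩, ackEnc_injective, ?_, ?_⟩
  · rintro y ⟨n, hn⟩
    obtain ⟨N, hN⟩ := ackEnc_surj n
    obtain ⟨m, -, hm⟩ := hN y hn
    exact ⟨m, hm⟩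
  · intro a b
    rw [AckMem, mem_ackEnc]
    constructor
    · exact fun h => ⟨a, h, rfl⟩
    · rintro ⟨c, hc, h⟩
      rwa [ackEnc_injective h]
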